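/- arXiv:2306.02093 — 2 statements merged into one kernel-verified Lean document; each statement's English description precedes it below -/
import Mathlib

section
/- Let X be a finitely generated free abelian group equipped with an automorphism π of finite order, let p be a prime and q a power of p. Then the endomorphism (q − π) of X is injective, and there is a group isomorphism X/(q−π)X ≅ (X ⊗ ℚ_{p'}/ℤ)^{qπ^{-1}}, where ℚ_{p'}/ℤ is the prime-to-p part of ℚ/ℤ and the superscript denotes the fixed points of the automorphism x ⊗ t ↦ π^{-1}(x) ⊗ qt. -/
open TensorProduct

def primeToPart (p : ℕ) (A : Type*) [AddCommGroup A] : AddSubgroup A where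
  carrier := {x | ∃ n : ℕ, 0 < n ∧ n.Coprime p ∧ n • x = 0}
  zero_mem' := ⟨1, one_pos, Nat.coprime_one_left p, by simp⟩
  add_mem' := by
    rintro x y ⟨n, hn, hnp, hx⟩ ⟨m, hm, hmp, hy⟩
    refine ⟨n * m, Nat.mul_pos hn hm, Nat.Coprime.mul hnp hmp, ?_⟩
    calc (n * m) • (x + y) = n • m • x + n • m • y := by
          rw [smul_add, mul_smul, mul_smul]
      _ = 0 := by rw [hy, smul_zero, add_zero, smul_comm, hx, smul_zero]
  neg_mem' := by
    rintro x ⟨n, hn, hnp, hx⟩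
    exact ⟨n, hn, hnp, by rw [smul_neg, hx, neg_zero]⟩

abbrev QmodZ : Type := ℚ ⧸ AddSubgroup.zmultiples (1 : ℚ)

private lemma tmul_eps_eq_zero_iff
    {X : Type*} [AddCommGroup X]
    {ι : Type*} [DecidableEq ι] (b : Module.Basis ι ℤ X)
    {A : Type*} [AddCommGroup A] (ε : A) (m : ℤ)
    (hε : ∀ k : ℤ, k • ε = 0 ↔ m ∣ k) (x : X) :
    x ⊗ₜ[ℤ] ε = 0 ↔ ∃ y, x = m • y := by
  set e :=
    (TensorProduct.congr b.repr (LinearEquiv.refl ℤ A)).trans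
      (TensorProduct.finsuppScalarLeft ℤ A ι) with he
  have happly : ∀ (u : X) (i : ι), e (u ⊗ₜ[ℤ] ε) i = b.repr u i • ε := by
    intro u i
    simp [he, TensorProduct.congr_tmul]
  constructor
  · intro h
    have h0 : ∀ i, b.repr x i • ε = 0 := by
      intro i
      rw [← happly, h, map_zero, Finsupp.coe_zero, Pi.zero_apply]
    have hdvd : ∀ i, m ∣ b.repr x i := fun i => (hε _).mp (h0 i)
    refine ⟨b.repr.symm ((b.repr x).mapRange (fun a => a / m) (by simp)), ?_⟩
    apply b.repr.injective
    rw [b.repr.map_smul, LinearEquiv.apply_symm_apply]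
    ext i
    simp only [Finsupp.coe_smul, Pi.smul_apply, Finsupp.mapRange_apply, smul_eq_mul]
    exact (Int.mul_ediv_cancel' (hdvd i)).symm
  · rintro ⟨y, rfl⟩
    calc (m • y) ⊗ₜ[ℤ] ε = y ⊗ₜ[ℤ] (m • ε) := TensorProduct.smul_tmul (R := ℤ) m y ε
      _ = 0 := by rw [(hε m).mpr dvd_rfl, TensorProduct.tmul_zero]

private lemma exists_tmul_eps
    {X : Type*} [AddCommGroup X]
    {ι : Type*} [DecidableEq ι] [Fintype ι] (b : Module.Basis ι ℤ X)
    {A : Type*} [AddCommGroup A] (ε : A) (m : ℤ)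
    (hgen : ∀ a : A, m • a = 0 → ∃ k : ℤ, a = k • ε)
    (z : X ⊗[ℤ] A) (hz : m • z = 0) : ∃ x : X, z = x ⊗ₜ[ℤ] ε := by
  set e :=
    (TensorProduct.congr b.repr (LinearEquiv.refl ℤ A)).trans
      (TensorProduct.finsuppScalarLeft ℤ A ι) with he
  have happly : ∀ (u : X) (i : ι), e (u ⊗ₜ[ℤ] ε) i = b.repr u i • ε := by
    intro u i
    simp [he, TensorProduct.congr_tmul]
  have hw : ∀ i, m • (e z) i = 0 := by
    intro i
    have h1 : e (m • z) = 0 := by rw [hz, map_zero]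
    have h2 : (e (m • z)) i = 0 := by rw [h1]; rfl
    calc m • (e z) i = (m • e z) i := (Finsupp.smul_apply _ _ _).symm
      _ = (e (m • z)) i := by rw [e.map_smul]
      _ = 0 := h2
  choose k hk using fun i => hgen _ (hw i)
  refine ⟨b.repr.symm (Finsupp.equivFunOnFinite.symm k), ?_⟩
  apply e.injective
  ext i
  rw [happly, LinearEquiv.apply_symm_apply]
  simpa using hk i

private lemma qmz_zsmul_mk (k : ℤ) (r : ℚ) :
    k • (QuotientAddGroup.mk r : QmodZ) = QuotientAddGroup.mk (k • r) := by
  exact (map_zsmul (QuotientAddGroup.mk' (AddSubgroup.zmultiples (1:ℚ))) k r).symm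

private lemma qmz_order (m : ℕ) (hm : 0 < m) (k : ℤ) :
    k • (QuotientAddGroup.mk ((m:ℚ)⁻¹) : QmodZ) = 0 ↔ (m:ℤ) ∣ k := by
  have hm0 : (m:ℚ) ≠ 0 := Nat.cast_ne_zero.mpr hm.ne'
  rw [qmz_zsmul_mk, QuotientAddGroup.eq_zero_iff, AddSubgroup.mem_zmultiples_iff]
  constructor
  · rintro ⟨z, hz⟩
    refine ⟨z, ?_⟩
    have h1 : (z:ℚ) = k * (m:ℚ)⁻¹ := by
      simpa [zsmul_eq_mul] using hz
    have h2 : (k:ℚ) = (m:ℤ) * z := by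
      push_cast
      field_simp at h1
      linarith
    exact_mod_cast h2
  · rintro ⟨c, rfl⟩
    refine ⟨c, ?_⟩
    simp only [zsmul_eq_mul]
    push_cast
    field_simp

private lemma qmz_gen (m : ℕ) (hm : 0 < m) (a : QmodZ) (ha : (m:ℤ) • a = 0) :
    ∃ k : ℤ, a = k • (QuotientAddGroup.mk ((m:ℚ)⁻¹) : QmodZ) := by
  have hm0 : (m:ℚ) ≠ 0 := Nat.cast_ne_zero.mpr hm.ne'
  obtain ⟨r, rfl⟩ := QuotientAddGroup.mk_surjective a
  rw [qmz_zsmul_mk, QuotientAddGroup.eq_zero_iff, AddSubgroup.mem_zmultiples_iff] at ha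
  obtain ⟨z, hz⟩ := ha
  refine ⟨z, ?_⟩
  rw [qmz_zsmul_mk]
  congr 1
  have h1 : (z:ℚ) = m * r := by simpa [zsmul_eq_mul] using hz
  rw [zsmul_eq_mul, h1]
  field_simp

/-- For a finitely generated free abelian group `X` with a finite-order automorphism
`π`, and `q = p^f` a prime power, the endomorphism `q - π` is injective, and
`X/(q-π)X ≅ (X ⊗ ℚ_{p'}/ℤ)^{qπ⁻¹}`, the fixed points of `x ⊗ t ↦ π⁻¹ x ⊗ q t`. -/
theorem coinvariants_iso_fixed_points
    (X : Type*) [AddCommGroup X] [Module.Free ℤ X] [Module.Finite ℤ X]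
    (π : X ≃ₗ[ℤ] X) (d : ℕ) (hd : 0 < d) (hπ : π ^ d = 1)
    (p : ℕ) (hp : p.Prime) (f : ℕ) (hf : 0 < f) (q : ℕ) (hq : q = p ^ f) :
    Function.Injective ((q : ℤ) • (LinearMap.id : X →ₗ[ℤ] X) - (π : X →ₗ[ℤ] X)) ∧
    Nonempty
      ((X ⧸ LinearMap.range ((q : ℤ) • (LinearMap.id : X →ₗ[ℤ] X) - (π : X →ₗ[ℤ] X))) ≃+
        (AddMonoidHom.eqLocus
          (TensorProduct.map (π.symm : X →ₗ[ℤ] X)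
            ((q : ℤ) • (LinearMap.id : (primeToPart p QmodZ) →ₗ[ℤ] (primeToPart p QmodZ)))).toAddMonoidHom
          (AddMonoidHom.id (X ⊗[ℤ] (primeToPart p QmodZ))))) := by
  classical
  -- numerics
  have hq2 : 1 < q := by
    rw [hq]; exact Nat.one_lt_pow hf.ne' hp.one_lt
  have hqd : 1 < q ^ d := Nat.one_lt_pow hd.ne' hq2
  set m : ℕ := q ^ d - 1 with hmdef
  have hm : 0 < m := by omega
  have hmz : (m : ℤ) = (q : ℤ) ^ d - 1 := by
    have hcast : ((q ^ d : ℕ) : ℤ) = (q : ℤ) ^ d := by push_cast; ring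
    rw [hmdef, Nat.cast_sub hqd.le, hcast, Nat.cast_one]
  have hcop : m.Coprime p := by
    have hpq : p ∣ q ^ d := by
      rw [hq]
      exact dvd_pow (dvd_pow_self p hf.ne') hd.ne'
    have hnd : ¬ p ∣ m := by
      intro hdvd
      have h1 : p ∣ q ^ d - m := Nat.dvd_sub hpq hdvd
      have h2 : q ^ d - m = 1 := by omega
      rw [h2, Nat.dvd_one] at h1
      exact hp.one_lt.ne' h1
    exact Nat.coprime_comm.mp (hp.coprime_iff_not_dvd.mpr hnd)
  -- the endomorphisms
  set Φ : X →ₗ[ℤ] X := (q : ℤ) • (LinearMap.id : X →ₗ[ℤ] X) - (π : X →ₗ[ℤ] X) with hΦdef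
  set Ψ : X →ₗ[ℤ] X :=
    ∑ i ∈ Finset.range d,
      ((q : ℤ) • (1 : Module.End ℤ X)) ^ i * ((π : X →ₗ[ℤ] X)) ^ (d - 1 - i) with hΨdef
  have hcomm : Commute ((q : ℤ) • (1 : Module.End ℤ X)) ((π : X →ₗ[ℤ] X)) :=
    (Commute.one_left _).smul_left _
  have hπd : ((π : X →ₗ[ℤ] X)) ^ d = 1 := by
    have key : ∀ (k : ℕ) (x : X), (((π : X →ₗ[ℤ] X)) ^ k) x = (π ^ k) x := by
      intro k
      induction k with
      | zero => intro x; simp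
      | succ n ih =>
          intro x
          simp only [pow_succ, Module.End.mul_apply]
          exact ih (π x)
    ext x
    rw [key d x, hπ]
    simp
  have hxd : ((q : ℤ) • (1 : Module.End ℤ X)) ^ d = ((q : ℤ) ^ d) • (1 : Module.End ℤ X) := by
    rw [smul_pow, one_pow]
  have hsub : ((q : ℤ) ^ d) • (1 : Module.End ℤ X) - ((π : X →ₗ[ℤ] X)) ^ d
      = (m : ℤ) • (1 : Module.End ℤ X) := by
    rw [hπd, hmz, sub_smul, one_smul]
  have hΨΦ : Ψ * Φ = (m : ℤ) • (1 : Module.End ℤ X) := by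
    have h := hcomm.geom_sum₂_mul d
    rw [hxd] at h
    rw [hΨdef, hΦdef]
    exact h.trans hsub
  have hΦΨ : Φ * Ψ = (m : ℤ) • (1 : Module.End ℤ X) := by
    have h := hcomm.mul_geom_sum₂ d
    rw [hxd] at h
    rw [hΨdef, hΦdef]
    exact h.trans hsub
  have hΨΦx : ∀ x : X, Ψ (Φ x) = (m : ℤ) • x := by
    intro x
    have h := LinearMap.ext_iff.mp hΨΦ x
    simpa [Module.End.mul_apply] using h
  have hΦΨx : ∀ x : X, Φ (Ψ x) = (m : ℤ) • x := by
    intro x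
    have h := LinearMap.ext_iff.mp hΦΨ x
    simpa [Module.End.mul_apply] using h
  have hmZ : (m : ℤ) ≠ 0 := by
    exact_mod_cast hm.ne'
  have hΦinj : Function.Injective ⇑Φ := by
    intro a b hab
    have h0 : Φ (a - b) = 0 := by rw [map_sub, hab, sub_self]
    have h1 : (m : ℤ) • (a - b) = 0 := by rw [← hΨΦx (a - b), h0, map_zero]
    rcases smul_eq_zero.mp h1 with h | h
    · exact absurd h hmZ
    · exact sub_eq_zero.mp h
  have hΨinj : Function.Injective ⇑Ψ := by
    intro a b hab
    have h0 : Ψ (a - b) = 0 := by rw [map_sub, hab, sub_self]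
    have h1 : (m : ℤ) • (a - b) = 0 := by rw [← hΦΨx (a - b), h0, map_zero]
    rcases smul_eq_zero.mp h1 with h | h
    · exact absurd h hmZ
    · exact sub_eq_zero.mp h
  refine ⟨hΦinj, ?_⟩
  -- the element ε
  set ε0 : QmodZ := QuotientAddGroup.mk ((m : ℚ)⁻¹) with hε0def
  have hmemε : ε0 ∈ primeToPart p QmodZ := by
    refine ⟨m, hm, hcop, ?_⟩
    have h := (qmz_order m hm (m : ℤ)).mpr dvd_rfl
    rwa [natCast_zsmul] at h
  set ε : (primeToPart p QmodZ) := ⟨ε0, hmemε⟩ with hεdef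
  have hcoesmul : ∀ k : ℤ, ((k • ε : primeToPart p QmodZ) : QmodZ) = k • ε0 := by
    intro k
    exact map_zsmul ((primeToPart p QmodZ).subtype) k ε
  have horderA : ∀ k : ℤ, k • ε = 0 ↔ (m : ℤ) ∣ k := by
    intro k
    rw [← qmz_order m hm k]
    constructor
    · intro h
      have h2 := (hcoesmul k).symm
      rw [h] at h2
      simpa using h2
    · intro h
      apply Subtype.ext
      rw [hcoesmul k]
      simpa using h
  have hgenA : ∀ a : (primeToPart p QmodZ), (m : ℤ) • a = 0 → ∃ k : ℤ, a = k • ε := by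
    intro a ha
    have haQ : (m : ℤ) • (a : QmodZ) = 0 := by
      have h := map_zsmul ((primeToPart p QmodZ).subtype) (m : ℤ) a
      rw [ha, map_zero] at h
      exact h.symm
    obtain ⟨k, hk⟩ := qmz_gen m hm _ haQ
    refine ⟨k, Subtype.ext ?_⟩
    rw [hcoesmul k]
    exact hk
  -- basis
  let b := Module.Free.chooseBasis ℤ X
  -- the maps
  set T := TensorProduct.map (π.symm : X →ₗ[ℤ] X)
      ((q : ℤ) • (LinearMap.id : (primeToPart p QmodZ) →ₗ[ℤ] (primeToPart p QmodZ))) with hTdef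
  set L := AddMonoidHom.eqLocus T.toAddMonoidHom
      (AddMonoidHom.id (X ⊗[ℤ] (primeToPart p QmodZ))) with hLdef
  set g : X →ₗ[ℤ] X ⊗[ℤ] (primeToPart p QmodZ) :=
    ((TensorProduct.mk ℤ X (primeToPart p QmodZ)).flip ε) ∘ₗ Ψ with hgdef
  have hg : ∀ x : X, g x = (Ψ x) ⊗ₜ[ℤ] ε := fun x => rfl
  have hTtmul : ∀ (x : X) (a : (primeToPart p QmodZ)),
      T (x ⊗ₜ[ℤ] a) = (π.symm x) ⊗ₜ[ℤ] ((q : ℤ) • a) := by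
    intro x a
    rw [hTdef, TensorProduct.map_tmul]
    rfl
  have hkey : ∀ x : X, (q : ℤ) • (π.symm (Ψ x)) = Ψ x + (m : ℤ) • π.symm x := by
    intro x
    apply π.injective
    rw [map_smul, π.apply_symm_apply, map_add, map_smul, π.apply_symm_apply]
    have h2 : (q : ℤ) • Ψ x - π (Ψ x) = (m : ℤ) • x := by
      have h := hΦΨx x
      rw [hΦdef] at h
      simpa [LinearMap.sub_apply] using h
    rw [← h2]
    abel
  have hmε : (m : ℤ) • ε = 0 := (horderA (m : ℤ)).mpr dvd_rfl
  have hmemg : ∀ x : X, T (g x) = g x := by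
    intro x
    rw [hg, hTtmul]
    calc (π.symm (Ψ x)) ⊗ₜ[ℤ] ((q : ℤ) • ε)
        = ((q : ℤ) • π.symm (Ψ x)) ⊗ₜ[ℤ] ε := (TensorProduct.smul_tmul _ _ _).symm
      _ = (Ψ x + (m : ℤ) • π.symm x) ⊗ₜ[ℤ] ε := by rw [hkey]
      _ = Ψ x ⊗ₜ[ℤ] ε + ((m : ℤ) • π.symm x) ⊗ₜ[ℤ] ε := TensorProduct.add_tmul _ _ _
      _ = Ψ x ⊗ₜ[ℤ] ε := by
          rw [TensorProduct.smul_tmul, hmε, TensorProduct.tmul_zero, add_zero]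
  have hle : LinearMap.range Φ ≤ LinearMap.ker g := by
    rintro _ ⟨y, rfl⟩
    rw [LinearMap.mem_ker, hg, hΨΦx y]
    calc ((m : ℤ) • y) ⊗ₜ[ℤ] ε = y ⊗ₜ[ℤ] ((m : ℤ) • ε) := TensorProduct.smul_tmul _ _ _
      _ = 0 := by rw [hmε, TensorProduct.tmul_zero]
  set gbar := Submodule.liftQ (LinearMap.range Φ) g hle with hgbardef
  have hmem' : ∀ z, gbar.toAddMonoidHom z ∈ L := by
    intro z
    obtain ⟨x, rfl⟩ := Submodule.Quotient.mk_surjective _ z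
    show T.toAddMonoidHom (gbar (Submodule.Quotient.mk x))
        = AddMonoidHom.id _ (gbar (Submodule.Quotient.mk x))
    rw [hgbardef, Submodule.liftQ_apply]
    exact hmemg x
  set H := AddMonoidHom.codRestrict gbar.toAddMonoidHom L hmem' with hHdef
  have hHval : ∀ x : X, (H (Submodule.Quotient.mk x) : X ⊗[ℤ] (primeToPart p QmodZ)) = g x := by
    intro x
    show gbar (Submodule.Quotient.mk x) = g x
    rw [hgbardef, Submodule.liftQ_apply]
  have hHinj : Function.Injective ⇑H := by
    rw [injective_iff_map_eq_zero]
    intro z hz0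
    obtain ⟨x, rfl⟩ := Submodule.Quotient.mk_surjective _ z
    have hgx : g x = 0 := by
      rw [← hHval x, hz0]
      rfl
    rw [hg] at hgx
    obtain ⟨y, hy⟩ := (tmul_eps_eq_zero_iff b ε (m : ℤ) horderA (Ψ x)).mp hgx
    have hxy : x = Φ y := hΨinj (hy.trans (hΨΦx y).symm)
    rw [Submodule.Quotient.mk_eq_zero]
    exact ⟨y, hxy.symm⟩
  have hHsurj : Function.Surjective ⇑H := by
    rintro ⟨z, hzmem⟩
    have hz : T z = z := hzmem
    set P := TensorProduct.map ((π : X →ₗ[ℤ] X))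
      (LinearMap.id : (primeToPart p QmodZ) →ₗ[ℤ] (primeToPart p QmodZ)) with hPdef
    have hPT : P ∘ₗ T = (q : ℤ) • (LinearMap.id :
        X ⊗[ℤ] (primeToPart p QmodZ) →ₗ[ℤ] X ⊗[ℤ] (primeToPart p QmodZ)) := by
      apply TensorProduct.ext'
      intro x t
      rw [LinearMap.comp_apply, hTtmul]
      rw [hPdef, TensorProduct.map_tmul]
      simp only [LinearEquiv.coe_coe, LinearEquiv.apply_symm_apply, LinearMap.id_apply,
        LinearMap.smul_apply]
      exact tmul_smul _ _ _
    have hPz : P z = (q : ℤ) • z := by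
      calc P z = P (T z) := by rw [hz]
        _ = (P ∘ₗ T) z := rfl
        _ = (q : ℤ) • z := by rw [hPT]; rfl
    have hPk : ∀ k : ℕ, (P ^ k) z = ((q : ℤ) ^ k) • z := by
      intro k
      induction k with
      | zero => simp
      | succ n ih =>
          have : (P ^ (n + 1)) z = (P ^ n) (P z) := by
            rw [pow_succ, Module.End.mul_apply]
          rw [this, hPz, map_smul, ih, smul_smul, pow_succ, mul_comm]
    have hPd : P ^ d = LinearMap.id := by
      have hid : ((LinearMap.id : (primeToPart p QmodZ) →ₗ[ℤ] (primeToPart p QmodZ))) ^ d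
          = LinearMap.id := one_pow d
      rw [hPdef, TensorProduct.map_pow, hπd, hid]
      exact TensorProduct.map_id
    have hzm : (m : ℤ) • z = 0 := by
      have h1 : (P ^ d) z = z := by rw [hPd]; rfl
      rw [hPk d] at h1
      calc (m : ℤ) • z = ((q : ℤ) ^ d) • z - z := by rw [hmz, sub_smul, one_smul]
        _ = 0 := by rw [h1, sub_self]
    obtain ⟨x₀, rfl⟩ := exists_tmul_eps b ε (m : ℤ) hgenA z hzm
    have hPz2 : P (x₀ ⊗ₜ[ℤ] ε) = (π x₀) ⊗ₜ[ℤ] ε := by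
      rw [hPdef, TensorProduct.map_tmul]
      rfl
    have heq : (π x₀) ⊗ₜ[ℤ] ε = ((q : ℤ) • x₀) ⊗ₜ[ℤ] ε := by
      rw [← hPz2, hPz, TensorProduct.smul_tmul']
    have h0 : (Φ x₀) ⊗ₜ[ℤ] ε = 0 := by
      have hsub0 : ((q : ℤ) • x₀ - π x₀) ⊗ₜ[ℤ] ε = 0 := by
        rw [TensorProduct.sub_tmul, ← heq, sub_self]
      have hΦx : Φ x₀ = (q : ℤ) • x₀ - π x₀ := by
        rw [hΦdef]
        simp [LinearMap.sub_apply]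
      rw [hΦx]
      exact hsub0
    obtain ⟨w, hw⟩ := (tmul_eps_eq_zero_iff b ε (m : ℤ) horderA (Φ x₀)).mp h0
    have hx₀ : x₀ = Ψ w := hΦinj (hw.trans (hΦΨx w).symm)
    refine ⟨Submodule.Quotient.mk w, ?_⟩
    apply Subtype.ext
    rw [hHval w, hg, ← hx₀]
  exact ⟨AddEquiv.ofBijective H ⟨hHinj, hHsurj⟩⟩
end

section
/- Let Δ be a finite set, π: Δ → Δ a bijection, p a prime and r ≥ 1. Let X = ℤ^Δ be the free abelian group with basis (ω_α)_{α∈Δ}, and extend π to an automorphism of X by π(ω_α) = ω_{π(α)}. Then every element of X is congruent modulo (p^r − π)X to an element ∑ n_α ω_α with 0 ≤ n_α < p^r for all α; i.e., the restriction of the quotient map X → X/(p^r − π)X to the box {λ = ∑ n_α ω_α : 0 ≤ n_α < p^r} is surjective. -/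
/-- The endomorphism `p^r - π` of `ℤ^Δ`, where `π` permutes the basis. -/
def boxEndo {Δ : Type*} (π : Equiv.Perm Δ) (q : ℕ) : (Δ → ℤ) →+ (Δ → ℤ) :=
  AddMonoidHom.mk' (fun x α => (q : ℤ) * x α - x (π.symm α)) (by
    intro x y
    funext α
    simp
    ring)

private lemma box_nonneg {Δ : Type*} [Fintype Δ] (π : Equiv.Perm Δ) (q : ℕ) (hq : 2 ≤ q) :
    ∀ m : ℕ, ∀ lam : Δ → ℤ, (∀ α, 0 ≤ lam α) → (∑ α, lam α) ≤ (m : ℤ) →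
      ∃ n : Δ → ℤ, (∀ α, 0 ≤ n α ∧ n α < (q : ℤ)) ∧
        lam - n ∈ AddMonoidHom.range (boxEndo π q) := by
  classical
  intro m
  induction m with
  | zero =>
    intro lam hpos hsum
    refine ⟨lam, fun α => ⟨hpos α, ?_⟩, by simpa using (AddMonoidHom.range (boxEndo π q)).zero_mem⟩
    have h1 : lam α ≤ ∑ β, lam β := Finset.single_le_sum (fun β _ => hpos β) (Finset.mem_univ α)
    have hq' : (2 : ℤ) ≤ (q : ℤ) := by exact_mod_cast hq
    push_cast at hsum
    linarith
  | succ m ih =>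
    intro lam hpos hsum
    by_cases hbox : ∀ α, lam α < (q : ℤ)
    · exact ⟨lam, fun α => ⟨hpos α, hbox α⟩,
        by simpa using (AddMonoidHom.range (boxEndo π q)).zero_mem⟩
    · push_neg at hbox
      obtain ⟨α, hα⟩ := hbox
      set e : Δ → ℤ := Pi.single α 1 with he
      have he01 : ∀ γ, e γ = 0 ∨ e γ = 1 := by
        intro γ
        by_cases h : γ = α
        · right; simp [he, h]
        · left; simp [he, h]
      have heα : e α = 1 := by simp [he]
      set lam' : Δ → ℤ := lam - boxEndo π q e with hlam'
      have hval : ∀ β, lam' β = lam β - (q : ℤ) * e β + e (π.symm β) := by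
        intro β; simp [hlam', boxEndo]; ring
      have hpos' : ∀ β, 0 ≤ lam' β := by
        intro β
        rw [hval]
        rcases he01 (π.symm β) with h1 | h1 <;> rw [h1] <;>
        · by_cases h : β = α
          · subst h; rw [heα]; linarith
          · have : e β = 0 := by simp [he, h]
            rw [this]; have := hpos β; linarith
      have hsum_e : ∑ β, e β = 1 := by simp [he]
      have hsum_e' : ∑ β, e (π.symm β) = 1 := by
        rw [Equiv.sum_comp π.symm e]; exact hsum_e
      have hsum' : ∑ β, lam' β = (∑ β, lam β) - ((q : ℤ) - 1) := by
        have : ∑ β, lam' β = (∑ β, lam β) - (q : ℤ) * (∑ β, e β) + ∑ β, e (π.symm β) := by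
          simp only [hval, Finset.sum_add_distrib, Finset.sum_sub_distrib, Finset.mul_sum]
        rw [this, hsum_e, hsum_e']; ring
      have hq' : (2 : ℤ) ≤ (q : ℤ) := by exact_mod_cast hq
      have hsum'' : ∑ β, lam' β ≤ (m : ℤ) := by
        rw [hsum']
        push_cast at hsum ⊢
        linarith
      obtain ⟨n, hn, x, hx⟩ := ih lam' hpos' hsum''
      refine ⟨n, hn, x + e, ?_⟩
      rw [map_add, hx, hlam']
      abel

/-- Every element of `ℤ^Δ` is congruent mod `(p^r - π)ℤ^Δ` to a vector with entries
in `[0, p^r)`. -/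
theorem box_representatives
    (Δ : Type*) [Fintype Δ] (π : Equiv.Perm Δ)
    (p : ℕ) (hp : p.Prime) (r : ℕ) (hr : 0 < r) :
    ∀ lam : Δ → ℤ, ∃ n : Δ → ℤ,
      (∀ α, 0 ≤ n α ∧ n α < (p : ℤ) ^ r) ∧
      lam - n ∈ AddMonoidHom.range (boxEndo π (p ^ r)) := by
  classical
  intro lam
  set q : ℕ := p ^ r with hqdef
  have hq : 2 ≤ q := by
    calc 2 ≤ p := hp.two_le
    _ ≤ p ^ r := Nat.le_self_pow hr.ne' p
  have hq' : (2 : ℤ) ≤ (q : ℤ) := by exact_mod_cast hq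
  set k : ℕ := ∑ α, (lam α).natAbs with hk
  set cfun : Δ → ℤ := fun _ => (k : ℤ) with hcfun
  set lam2 : Δ → ℤ := lam + boxEndo π q cfun with hlam2
  have hval : ∀ β, lam2 β = lam β + ((q : ℤ) * k - k) := by
    intro β; simp [hlam2, hcfun, boxEndo]
  have hpos : ∀ β, 0 ≤ lam2 β := by
    intro β
    rw [hval]
    have h1 : (lam β).natAbs ≤ k :=
      Finset.single_le_sum (f := fun β => (lam β).natAbs) (fun β _ => Nat.zero_le _)
        (Finset.mem_univ β)
    have h2 : -lam β ≤ ((lam β).natAbs : ℤ) := by omega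
    have h3 : ((lam β).natAbs : ℤ) ≤ (k : ℤ) := by exact_mod_cast h1
    have h4 : (0 : ℤ) ≤ (k : ℤ) := Int.natCast_nonneg k
    nlinarith
  obtain ⟨n, hn, x, hx⟩ := box_nonneg π q hq (∑ β, lam2 β).toNat lam2 hpos (Int.self_le_toNat _)
  refine ⟨n, ?_, x - cfun, ?_⟩
  · intro α
    have := hn α
    constructor
    · exact this.1
    · have : n α < (q : ℤ) := this.2
      rw [hqdef] at this
      exact_mod_cast this
  · rw [map_sub, hx, hlam2]
    abel
end
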